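/- arXiv:1607.06781 — 5 statements merged into one kernel-verified Lean document; each statement's English description precedes it below -/
import Mathlib

section
/- Let N ≥ 1 and let k be a natural number with 1 ≤ k ≤ N. Let z_1,…,z_N be real numbers with 0 ≤ z_i ≤ 1 for all i, such that at most k of the z_i are nonzero and Σ_{i=1}^N z_i² ≥ 1 (note this also forces Σ_{i=1}^N z_i ≥ 1 since each z_i ≤ 1). Then the empirical variance v satisfies (N − k²)/N² ≤ v ≤ (Nk − 1)/N². (Paper's Proposition 2, variance bound under [1,k]-sparsity with negligible ε.) -/
/-! With `S = ∑ zᵢ` and `Q = ∑ zᵢ²` one has `N² v = N Q - S²`, and `1 ≤ Q ≤ S ≤ k`: the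
squares are dominated by the values in `[0, 1]`, and at most `k` values are nonzero. -/

open Finset

theorem sum_le_ncard_support_of_le_one {ι : Type*} [Fintype ι] {f : ι → ℝ}
    (hf : ∀ i, f i ≤ 1) : ∑ i, f i ≤ ({i | f i ≠ 0} : Set ι).ncard := by
  classical
  rw [← sum_filter_ne_zero, Set.ncard_eq_toFinset_card', Set.toFinset_ofPred]
  simpa using sum_le_card_nsmul _ _ 1 fun i _ => hf i

theorem sum_sq_le_sum_of_nonneg_of_le_one {ι : Type*} (t : Finset ι) {f : ι → ℝ}
    (hf : ∀ i, 0 ≤ f i ∧ f i ≤ 1) : ∑ i ∈ t, f i ^ 2 ≤ ∑ i ∈ t, f i :=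
  sum_le_sum fun i _ => pow_le_of_le_one (hf i).1 (hf i).2 two_ne_zero

-- No assumption on `n`: for `n = 0` both sides are `0`.
theorem div_sub_div_sq_eq {K : Type*} [Field K] (a b n : K) :
    a / n - (b / n) ^ 2 = (n * a - b ^ 2) / n ^ 2 := by
  rcases eq_or_ne n 0 with rfl | hn
  · simp
  · field_simp

theorem sf_feature_variance_bounds_sparse_general
    (N k : ℕ)
    (z : Fin N → ℝ) (hz : ∀ i, 0 ≤ z i ∧ z i ≤ 1)
    (hsparse : ({i | z i ≠ 0} : Set (Fin N)).ncard ≤ k)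
    (hsumsq : 1 ≤ ∑ i, (z i) ^ 2)
    (m s v : ℝ)
    (hm : m = (∑ i, z i) / N)
    (hs : s = (∑ i, (z i) ^ 2) / N)
    (hv : v = s - m ^ 2) :
    ((N : ℝ) - (k : ℝ) ^ 2) / (N : ℝ) ^ 2 ≤ v ∧
      v ≤ ((N : ℝ) * k - 1) / (N : ℝ) ^ 2 := by
  set S := ∑ i, z i
  set Q := ∑ i, z i ^ 2
  have hQS : Q ≤ S := sum_sq_le_sum_of_nonneg_of_le_one _ hz
  have hSk : S ≤ k := (sum_le_ncard_support_of_le_one fun i => (hz i).2).trans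
    (by exact_mod_cast hsparse)
  have hN : (0 : ℝ) ≤ N := N.cast_nonneg
  rw [hv, hs, hm, div_sub_div_sq_eq]
  constructor <;> apply div_le_div_of_nonneg_right _ (by positivity)
  · nlinarith
  · nlinarith

/-- Paper's Proposition 2, variance bound under [1,k]-sparsity with negligible ε:
if z_i ∈ [0,1], at most k of the z_i are nonzero, and the sum of their squares is
at least 1, then the empirical variance lies in [(N-k²)/N², (Nk-1)/N²]. -/
theorem sf_feature_variance_bounds_sparse
    (N k : ℕ) (hN : 1 ≤ N) (hk1 : 1 ≤ k) (hkN : k ≤ N)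
    (z : Fin N → ℝ) (hz : ∀ i, 0 ≤ z i ∧ z i ≤ 1)
    (hsparse : ({i | z i ≠ 0} : Set (Fin N)).ncard ≤ k)
    (hsumsq : 1 ≤ ∑ i, (z i) ^ 2)
    (m s v : ℝ)
    (hm : m = (∑ i, z i) / N)
    (hs : s = (∑ i, (z i) ^ 2) / N)
    (hv : v = s - m ^ 2) :
    ((N : ℝ) - (k : ℝ) ^ 2) / (N : ℝ) ^ 2 ≤ v ∧
      v ≤ ((N : ℝ) * k - 1) / (N : ℝ) ^ 2 :=
  sf_feature_variance_bounds_sparse_general N k z hz hsparse hsumsq m s v hm hs hv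
end

section
/- Let N ≥ 1, let k be a natural number with 1 ≤ k ≤ N, and let 0 < ε ≤ 1. Let S ⊆ {1,…,N} with 1 ≤ |S| ≤ k, and let z_1,…,z_N be real numbers with z_i = ε for all i ∉ S, ε ≤ z_i ≤ 1 for all i ∈ S, Σ_{i∈S} z_i ≥ 1 + (|S|−1)ε, and Σ_{i∈S} z_i² ≥ 1 + (|S|−1)ε². Then the empirical variance v satisfies [N(1 − ε² + 2kε² − 2kε) − k²(1 + ε² − 2ε)]/N² ≤ v ≤ [N(k − kε² + 2ε² − 2ε) − 1 − ε² + 2ε]/N². (Paper's Proposition 2, proof step: variance bounds under [1,k]-sparsity with non-negligible ε.) -/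
/-!
With `n = N`, total `T = ∑ z i` and total of squares `Q = ∑ z i ^ 2`, the variance is
`v = (n Q - T²) / n²`. Splitting off the coordinates outside `S`, which all equal `ε`, gives
`T = ∑_S z + (n - |S|) ε` and `Q = ∑_S z² + (n - |S|) ε²`; the hypotheses on `S` then pin
`T` between `1 + (n - 1) ε` and `k + (n - k) ε`, and `Q` between the same expressions with `ε²`.
Since `T ≥ 0`, the variance is increasing in `Q` and decreasing in `T`, and the two bounds
are the values at the extreme corners.
-/

open Finset

theorem Finset.sum_univ_eq_sum_add_of_eq_off {ι R : Type*} [Fintype ι] [CommRing R]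
    (S : Finset ι) (f : ι → R) (a : R) (hf : ∀ i ∉ S, f i = a) :
    ∑ i, f i = ∑ i ∈ S, f i + ((Fintype.card ι : R) - S.card) * a := by
  classical
  rw [← sum_add_sum_compl S f, sum_congr rfl fun i hi => hf i (mem_compl.mp hi), sum_const,
    nsmul_eq_mul, card_compl, Nat.cast_sub (card_le_univ S)]

theorem padded_total_mem_Icc {n k c a A : ℝ} (hck : c ≤ k) (ha : a ≤ 1)
    (hlo : 1 + (c - 1) * a ≤ A) (hhi : A ≤ c) :
    A + (n - c) * a ∈ Set.Icc (1 + (n - 1) * a) (k + (n - k) * a) := by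
  have : 0 ≤ (k - c) * (1 - a) := mul_nonneg (by linarith) (by linarith)
  constructor <;> linarith

theorem div_sub_div_sq_bounds {n T Q Tlo Thi Qlo Qhi : ℝ} (hn : 0 < n) (hTlo₀ : 0 ≤ Tlo)
    (hT : T ∈ Set.Icc Tlo Thi) (hQ : Q ∈ Set.Icc Qlo Qhi) :
    (n * Qlo - Thi ^ 2) / n ^ 2 ≤ Q / n - (T / n) ^ 2 ∧
      Q / n - (T / n) ^ 2 ≤ (n * Qhi - Tlo ^ 2) / n ^ 2 := by
  obtain ⟨hTlo, hThi⟩ := hT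
  obtain ⟨hQlo, hQhi⟩ := hQ
  have hvar : Q / n - (T / n) ^ 2 = (n * Q - T ^ 2) / n ^ 2 := by field_simp
  rw [hvar]
  constructor
  · gcongr
    linarith
  · gcongr

theorem sf_feature_variance_bounds_sparse_eps_general
    (N k : ℕ) (hN : 1 ≤ N)
    (ε : ℝ) (hε0 : 0 < ε) (hε1 : ε ≤ 1)
    (S : Finset (Fin N)) (hSk : S.card ≤ k)
    (z : Fin N → ℝ)
    (hout : ∀ i ∉ S, z i = ε)
    (hin : ∀ i ∈ S, ε ≤ z i ∧ z i ≤ 1)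
    (hsum : 1 + ((S.card : ℝ) - 1) * ε ≤ ∑ i ∈ S, z i)
    (hsumsq : 1 + ((S.card : ℝ) - 1) * ε ^ 2 ≤ ∑ i ∈ S, (z i) ^ 2)
    (m s v : ℝ)
    (hm : m = (∑ i, z i) / N)
    (hs : s = (∑ i, (z i) ^ 2) / N)
    (hv : v = s - m ^ 2) :
    ((N : ℝ) * (1 - ε ^ 2 + 2 * k * ε ^ 2 - 2 * k * ε) -
        (k : ℝ) ^ 2 * (1 + ε ^ 2 - 2 * ε)) / (N : ℝ) ^ 2 ≤ v ∧
      v ≤ ((N : ℝ) * ((k : ℝ) - k * ε ^ 2 + 2 * ε ^ 2 - 2 * ε) -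
        1 - ε ^ 2 + 2 * ε) / (N : ℝ) ^ 2 := by
  have hn : (1 : ℝ) ≤ N := by exact_mod_cast hN
  have hck : (S.card : ℝ) ≤ k := by exact_mod_cast hSk
  have hsum_le : ∑ i ∈ S, z i ≤ S.card := by
    simpa using sum_le_card_nsmul S z 1 fun i hi => (hin i hi).2
  have hsumsq_le : ∑ i ∈ S, z i ^ 2 ≤ S.card := by
    simpa using sum_le_card_nsmul S (z · ^ 2) 1 fun i hi =>
      pow_le_one₀ (hε0.le.trans (hin i hi).1) (hin i hi).2
  have hT : ∑ i, z i ∈ Set.Icc (1 + (N - 1) * ε) (k + (N - k) * ε) := by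
    rw [sum_univ_eq_sum_add_of_eq_off S z ε hout, Fintype.card_fin]
    exact padded_total_mem_Icc hck hε1 hsum hsum_le
  have hQ : ∑ i, z i ^ 2 ∈ Set.Icc (1 + (N - 1) * ε ^ 2) (k + (N - k) * ε ^ 2) := by
    rw [sum_univ_eq_sum_add_of_eq_off S (z · ^ 2) (ε ^ 2) fun i hi => by rw [hout i hi],
      Fintype.card_fin]
    exact padded_total_mem_Icc hck (pow_le_one₀ hε0.le hε1) hsumsq hsumsq_le
  obtain ⟨hlo, hhi⟩ := div_sub_div_sq_bounds (n := N) (by positivity) (by nlinarith) hT hQ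
  subst hv hs hm
  constructor
  · convert hlo using 1
    ring
  · convert hhi using 1
    ring

/-- Paper's Proposition 2, proof step: variance bounds under [1,k]-sparsity with
non-negligible ε, where inactive features take the value ε. -/
theorem sf_feature_variance_bounds_sparse_eps
    (N k : ℕ) (hN : 1 ≤ N) (hk1 : 1 ≤ k) (hkN : k ≤ N)
    (ε : ℝ) (hε0 : 0 < ε) (hε1 : ε ≤ 1)
    (S : Finset (Fin N)) (hS1 : 1 ≤ S.card) (hSk : S.card ≤ k)
    (z : Fin N → ℝ)
    (hout : ∀ i ∉ S, z i = ε)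
    (hin : ∀ i ∈ S, ε ≤ z i ∧ z i ≤ 1)
    (hsum : 1 + ((S.card : ℝ) - 1) * ε ≤ ∑ i ∈ S, z i)
    (hsumsq : 1 + ((S.card : ℝ) - 1) * ε ^ 2 ≤ ∑ i ∈ S, (z i) ^ 2)
    (m s v : ℝ)
    (hm : m = (∑ i, z i) / N)
    (hs : s = (∑ i, (z i) ^ 2) / N)
    (hv : v = s - m ^ 2) :
    ((N : ℝ) * (1 - ε ^ 2 + 2 * k * ε ^ 2 - 2 * k * ε) -
        (k : ℝ) ^ 2 * (1 + ε ^ 2 - 2 * ε)) / (N : ℝ) ^ 2 ≤ v ∧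
      v ≤ ((N : ℝ) * ((k : ℝ) - k * ε ^ 2 + 2 * ε ^ 2 - 2 * ε) -
        1 - ε ^ 2 + 2 * ε) / (N : ℝ) ^ 2 :=
  sf_feature_variance_bounds_sparse_eps_general N k hN ε hε0 hε1 S hSk z hout hin hsum hsumsq m s v
    hm hs hv
end

section
/- Sparse filtering preserves cosine neighbourhoodness: let x₁, x₂ ∈ ℝ^M be nonzero vectors with cosine distance D_C(x₁,x₂) ≤ δ for some δ ∈ [0,1), let W ∈ ℝ^{L×M} have rows w_1,…,w_L, let c_1,…,c_L > 0, and suppose Wx₁ ≠ 0. Set k = ⟨x₁,x₂⟩/‖x₁‖₂² (which is positive since δ < 1). Then the Euclidean distance between the SF representations is bounded by ‖z(x₁) − z(x₂)‖₂ ≤ (2·√(2δ−δ²)·‖x₂‖₂·√(Σ_{l=1}^L ‖w_l‖₂²/c_l²)) / (k·‖f̃(x₁)‖₂); in particular the bound tends to 0 as δ → 0. (Corrected explicit form of the paper's Theorem 1 / Appendix C: if the cosine distance between two original samples is arbitrarily small, then the Euclidean distance between their SF representations is arbitrarily small, with an explicit constant.) -/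
open RealInnerProductSpace

/-! The feature map `x ↦ (|⟪w l, x⟫| / c l)_l` is positively homogeneous and Lipschitz with
constant `√(∑ ‖w l‖² / c l²)`, while normalization `u ↦ u / ‖u‖` is invariant under positive
scaling and satisfies `‖u / ‖u‖ - v / ‖v‖‖ ≤ 2 ‖u - v‖ / ‖u‖`. Hence `‖z x₁ - z x₂‖` is controlled
by `‖k • x₁ - x₂‖`, the distance from `x₂` to its orthogonal projection onto `ℝ x₁`. That distance
is `‖x₂‖ sin θ`, and `cos θ ≥ 1 - δ > 0` gives `sin θ ≤ √(1 - (1 - δ)²) = √(2δ - δ²)`. -/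

section Normalization

variable {E : Type*} [NormedAddCommGroup E] [NormedSpace ℝ E]

theorem inv_norm_smul_pos_smul {k : ℝ} (hk : 0 < k) (u : E) :
    ‖k • u‖⁻¹ • (k • u) = ‖u‖⁻¹ • u := by
  rw [norm_smul, Real.norm_eq_abs, abs_of_pos hk, smul_smul, mul_inv, mul_right_comm,
    inv_mul_cancel₀ hk.ne', one_mul]

theorem norm_inv_norm_smul_sub_inv_norm_smul_le {u : E} (hu : u ≠ 0) (v : E) :
    ‖‖u‖⁻¹ • u - ‖v‖⁻¹ • v‖ ≤ 2 * ‖u - v‖ / ‖u‖ := by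
  rcases eq_or_ne v 0 with rfl | hv
  · simp [norm_smul, hu]
  have hu' : 0 < ‖u‖ := norm_pos_iff.2 hu
  have hv' : 0 < ‖v‖ := norm_pos_iff.2 hv
  have rescale : ‖‖u‖⁻¹ • v - ‖v‖⁻¹ • v‖ = |‖v‖ - ‖u‖| / ‖u‖ := by
    rw [← sub_smul, norm_smul, Real.norm_eq_abs, inv_sub_inv hu'.ne' hv'.ne', abs_div,
      abs_of_pos (mul_pos hu' hv')]
    field_simp
  calc ‖‖u‖⁻¹ • u - ‖v‖⁻¹ • v‖
      = ‖‖u‖⁻¹ • (u - v) + (‖u‖⁻¹ • v - ‖v‖⁻¹ • v)‖ := by rw [smul_sub]; abel_nf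
    _ ≤ ‖u - v‖ / ‖u‖ + |‖v‖ - ‖u‖| / ‖u‖ := by
      refine (norm_add_le _ _).trans_eq ?_
      rw [norm_smul, rescale, Real.norm_eq_abs, abs_inv, abs_norm, inv_mul_eq_div]
    _ ≤ ‖u - v‖ / ‖u‖ + ‖u - v‖ / ‖u‖ := by
      gcongr
      rw [norm_sub_rev]
      exact abs_norm_sub_norm_le v u
    _ = 2 * ‖u - v‖ / ‖u‖ := by ring

end Normalization

section Cosine

variable {F : Type*} [NormedAddCommGroup F] [InnerProductSpace ℝ F]

noncomputable def cosineDist (x y : F) : ℝ := 1 - ⟪x, y⟫ / (‖x‖ * ‖y‖)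

theorem real_inner_pos_of_cosineDist_lt_one {x y : F} (h : cosineDist x y < 1) :
    0 < ⟪x, y⟫ := by
  have hcos : 0 < ⟪x, y⟫ / (‖x‖ * ‖y‖) := by unfold cosineDist at h; linarith
  rcases div_pos_iff.1 hcos with ⟨hpos, -⟩ | ⟨-, hneg⟩
  · exact hpos
  · exact absurd hneg (not_lt.2 (by positivity))

theorem norm_sq_inner_div_smul_sub (x y : F) :
    ‖(⟪x, y⟫ / ‖x‖ ^ 2) • x - y‖ ^ 2 = ‖y‖ ^ 2 - ⟪x, y⟫ ^ 2 / ‖x‖ ^ 2 := by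
  rcases eq_or_ne x 0 with rfl | hx
  · simp
  have hx' : ‖x‖ ≠ 0 := norm_ne_zero_iff.2 hx
  rw [norm_sub_sq_real, norm_smul, real_inner_smul_left, Real.norm_eq_abs, mul_pow, sq_abs]
  field_simp
  ring

theorem norm_inner_div_smul_sub_le_of_cosineDist_le {x y : F} {δ : ℝ}
    (h : cosineDist x y ≤ δ) (hδ : δ < 1) :
    ‖(⟪x, y⟫ / ‖x‖ ^ 2) • x - y‖ ≤ √(2 * δ - δ ^ 2) * ‖y‖ := by
  have hinner := real_inner_pos_of_cosineDist_lt_one (h.trans_lt hδ)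
  have hx : ‖x‖ ≠ 0 := by rw [norm_ne_zero_iff]; rintro rfl; simp at hinner
  have hy : ‖y‖ ≠ 0 := by rw [norm_ne_zero_iff]; rintro rfl; simp at hinner
  set ρ := ⟪x, y⟫ / (‖x‖ * ‖y‖) with hρ
  have hρδ : 1 - δ ≤ ρ := by unfold cosineDist at h; linarith
  have hsq : ⟪x, y⟫ ^ 2 / ‖x‖ ^ 2 = ρ ^ 2 * ‖y‖ ^ 2 := by rw [hρ]; field_simp
  have hρsq : (1 - δ) ^ 2 ≤ ρ ^ 2 := pow_le_pow_left₀ (by linarith) hρδ 2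
  calc ‖(⟪x, y⟫ / ‖x‖ ^ 2) • x - y‖
      = √((1 - ρ ^ 2) * ‖y‖ ^ 2) := by
        rw [← Real.sqrt_sq (norm_nonneg _), norm_sq_inner_div_smul_sub, hsq]
        ring_nf
    _ ≤ √((2 * δ - δ ^ 2) * ‖y‖ ^ 2) := by gcongr √(?_ * _); linarith
    _ = √(2 * δ - δ ^ 2) * ‖y‖ := by
      rw [Real.sqrt_mul' _ (sq_nonneg _), Real.sqrt_sq (norm_nonneg _)]

end Cosine

section SparseFilteringFeature

variable {F ι : Type*} [NormedAddCommGroup F] [InnerProductSpace ℝ F] (w : ι → F) (c : ι → ℝ)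

noncomputable def sfFeature (x : F) : EuclideanSpace ℝ ι :=
  WithLp.toLp 2 fun l => |⟪w l, x⟫| / c l

@[simp]
theorem sfFeature_apply (x : F) (l : ι) : sfFeature w c x l = |⟪w l, x⟫| / c l := rfl

theorem sfFeature_smul_of_nonneg {k : ℝ} (hk : 0 ≤ k) (x : F) :
    sfFeature w c (k • x) = k • sfFeature w c x := by
  ext l
  simp [real_inner_smul_right, abs_mul, abs_of_nonneg hk, mul_div_assoc]

variable {w c} in
theorem sfFeature_ne_zero (hc : ∀ l, c l ≠ 0) {x : F} (hx : ∃ l, ⟪w l, x⟫ ≠ 0) :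
    sfFeature w c x ≠ 0 := by
  obtain ⟨l, hl⟩ := hx
  intro h
  have := congr_arg (· l) h
  simp [hc l, hl] at this

theorem norm_sfFeature_sub_le [Fintype ι] (x y : F) :
    ‖sfFeature w c x - sfFeature w c y‖ ≤ √(∑ l, ‖w l‖ ^ 2 / c l ^ 2) * ‖x - y‖ := by
  have hcoord : ∀ l,
      ((|⟪w l, x⟫| - |⟪w l, y⟫|) / c l) ^ 2 ≤ ‖w l‖ ^ 2 / c l ^ 2 * ‖x - y‖ ^ 2 := by
    intro l
    have hlip : |(|⟪w l, x⟫| - |⟪w l, y⟫|)| ≤ ‖w l‖ * ‖x - y‖ :=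
      calc |(|⟪w l, x⟫| - |⟪w l, y⟫|)| ≤ |⟪w l, x⟫ - ⟪w l, y⟫| :=
            abs_abs_sub_abs_le_abs_sub _ _
        _ = |⟪w l, x - y⟫| := by rw [inner_sub_right]
        _ ≤ ‖w l‖ * ‖x - y‖ := abs_real_inner_le_norm _ _
    rw [div_pow, div_mul_eq_mul_div, ← mul_pow]
    exact div_le_div_of_nonneg_right (sq_le_sq.2 (hlip.trans (le_abs_self _))) (sq_nonneg _)
  rw [← Real.sqrt_sq (norm_nonneg (x - y)), ← Real.sqrt_mul (by positivity), Finset.sum_mul,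
    EuclideanSpace.norm_eq]
  gcongr with l
  simpa [sub_div] using hcoord l

end SparseFilteringFeature

theorem sf_preserves_cosine_neighbourhoodness_general
    (L M : ℕ)
    (x₁ x₂ : EuclideanSpace ℝ (Fin M))
    (δ : ℝ) (hδ1 : δ < 1)
    (hcos : 1 - ⟪x₁, x₂⟫ / (‖x₁‖ * ‖x₂‖) ≤ δ)
    (w : Fin L → EuclideanSpace ℝ (Fin M)) (c : Fin L → ℝ) (hc : ∀ l, 0 < c l)
    (hWx₁ : ∃ l, ⟪w l, x₁⟫ ≠ 0)
    (ftilde : EuclideanSpace ℝ (Fin M) → EuclideanSpace ℝ (Fin L))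
    (hft : ∀ x l, ftilde x l = |⟪w l, x⟫| / c l)
    (z : EuclideanSpace ℝ (Fin M) → EuclideanSpace ℝ (Fin L))
    (hz : ∀ x, z x = (‖ftilde x‖)⁻¹ • ftilde x)
    (k : ℝ) (hk : k = ⟪x₁, x₂⟫ / ‖x₁‖ ^ 2) :
    ‖z x₁ - z x₂‖ ≤
      (2 * Real.sqrt (2 * δ - δ ^ 2) * ‖x₂‖ *
          Real.sqrt (∑ l, ‖w l‖ ^ 2 / (c l) ^ 2)) /
        (k * ‖ftilde x₁‖) := by
  obtain rfl : ftilde = sfFeature w c := funext fun x => by ext l; exact hft x l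
  have hinner : 0 < ⟪x₁, x₂⟫ := real_inner_pos_of_cosineDist_lt_one (hcos.trans_lt hδ1)
  have hx₁ : x₁ ≠ 0 := by rintro rfl; simp at hinner
  have hk0 : 0 < k := hk ▸ div_pos hinner (by positivity)
  have hF₁ : sfFeature w c x₁ ≠ 0 := sfFeature_ne_zero (fun l => (hc l).ne') hWx₁
  calc ‖z x₁ - z x₂‖
      = ‖‖k • sfFeature w c x₁‖⁻¹ • (k • sfFeature w c x₁)
          - ‖sfFeature w c x₂‖⁻¹ • sfFeature w c x₂‖ := by
        rw [hz, hz, inv_norm_smul_pos_smul hk0]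
    _ ≤ 2 * ‖k • sfFeature w c x₁ - sfFeature w c x₂‖ / ‖k • sfFeature w c x₁‖ :=
        norm_inv_norm_smul_sub_inv_norm_smul_le (smul_ne_zero hk0.ne' hF₁) _
    _ ≤ 2 * (√(∑ l, ‖w l‖ ^ 2 / c l ^ 2) * (√(2 * δ - δ ^ 2) * ‖x₂‖))
          / (k * ‖sfFeature w c x₁‖) := by
        rw [norm_smul, Real.norm_of_nonneg hk0.le, ← sfFeature_smul_of_nonneg w c hk0.le]
        gcongr
        refine (norm_sfFeature_sub_le w c _ _).trans ?_
        gcongr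
        exact hk ▸ norm_inner_div_smul_sub_le_of_cosineDist_le hcos hδ1
    _ = _ := by ring

/-- Corrected explicit form of the paper's Theorem 1 / Appendix C: if the cosine
distance between two original samples is at most δ, then the Euclidean distance
between their SF representations is bounded by an explicit constant that tends to
0 as δ → 0. -/
theorem sf_preserves_cosine_neighbourhoodness
    (L M : ℕ)
    (x₁ x₂ : EuclideanSpace ℝ (Fin M)) (hx₁ : x₁ ≠ 0) (hx₂ : x₂ ≠ 0)
    (δ : ℝ) (hδ0 : 0 ≤ δ) (hδ1 : δ < 1)
    (hcos : 1 - ⟪x₁, x₂⟫ / (‖x₁‖ * ‖x₂‖) ≤ δ)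
    (w : Fin L → EuclideanSpace ℝ (Fin M)) (c : Fin L → ℝ) (hc : ∀ l, 0 < c l)
    (hWx₁ : ∃ l, ⟪w l, x₁⟫ ≠ 0) (hWx₂ : ∃ l, ⟪w l, x₂⟫ ≠ 0)
    (ftilde : EuclideanSpace ℝ (Fin M) → EuclideanSpace ℝ (Fin L))
    (hft : ∀ x l, ftilde x l = |⟪w l, x⟫| / c l)
    (z : EuclideanSpace ℝ (Fin M) → EuclideanSpace ℝ (Fin L))
    (hz : ∀ x, z x = (‖ftilde x‖)⁻¹ • ftilde x)
    (k : ℝ) (hk : k = ⟪x₁, x₂⟫ / ‖x₁‖ ^ 2) :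
    ‖z x₁ - z x₂‖ ≤
      (2 * Real.sqrt (2 * δ - δ ^ 2) * ‖x₂‖ *
          Real.sqrt (∑ l, ‖w l‖ ^ 2 / (c l) ^ 2)) /
        (k * ‖ftilde x₁‖) :=
  sf_preserves_cosine_neighbourhoodness_general L M x₁ x₂ δ hδ1 hcos w c hc hWx₁ ftilde hft z hz k
    hk
end

section
/- Every entry of the PSF output is strictly positive with an explicit lower bound: for all i ∈ {1,…,N} and l ∈ {1,…,L}, the PSF representation satisfies ε/((2+ε)·√(N·L)) ≤ z_{i,l} ≤ 1. (Supporting claim for the paper's Proposition 4: the PSF non-linearity 1+ε+sin bounds every feature value away from zero, so each learned feature has values in a sub-interval of (0,1].) -/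
/-- Supporting claim for the paper's Proposition 4: the PSF non-linearity 1+ε+sin
bounds every output value away from zero: ε/((2+ε)·√(N·L)) ≤ z_{i,l} ≤ 1. -/
theorem psf_output_strictly_positive_bounds
    (L M N : ℕ) (hL : 1 ≤ L) (hM : 1 ≤ M) (hN : 1 ≤ N)
    (W : Fin L → Fin M → ℝ) (x : Fin N → Fin M → ℝ)
    (ε : ℝ) (hε : 0 < ε)
    (F : Fin N → Fin L → ℝ)
    (hF : ∀ i l, F i l = 1 + ε + Real.sin (∑ m, W l m * x i m))
    (Ft : Fin N → Fin L → ℝ)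
    (hFt : ∀ i l, Ft i l = F i l / Real.sqrt (∑ i', (F i' l) ^ 2))
    (z : Fin N → Fin L → ℝ)
    (hz : ∀ i l, z i l = Ft i l / Real.sqrt (∑ l', (Ft i l') ^ 2)) :
    ∀ (i : Fin N) (l : Fin L),
      ε / ((2 + ε) * Real.sqrt ((N : ℝ) * (L : ℝ))) ≤ z i l ∧ z i l ≤ 1 := by
  intro i l
  -- basic bounds on F
  have hFlo : ∀ i l, ε ≤ F i l := by
    intro i l
    rw [hF]
    have := Real.neg_one_le_sin (∑ m, W l m * x i m)
    linarith
  have hFhi : ∀ i l, F i l ≤ 2 + ε := by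
    intro i l
    rw [hF]
    have := Real.sin_le_one (∑ m, W l m * x i m)
    linarith
  have hFpos : ∀ i l, 0 < F i l := fun i l => lt_of_lt_of_le hε (hFlo i l)
  have h2ε : (0:ℝ) < 2 + ε := by linarith
  -- bounds on S l = ∑ F i' l ^ 2
  have hSge : ∀ i l, F i l ≤ Real.sqrt (∑ i', (F i' l) ^ 2) := by
    intro i l
    have h1 : (F i l) ^ 2 ≤ ∑ i', (F i' l) ^ 2 :=
      Finset.single_le_sum (f := fun i' => (F i' l) ^ 2)
        (fun i' _ => sq_nonneg _) (Finset.mem_univ i)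
    calc F i l = Real.sqrt ((F i l) ^ 2) := (Real.sqrt_sq (hFpos i l).le).symm
      _ ≤ _ := Real.sqrt_le_sqrt h1
  have hSpos : ∀ i l, 0 < Real.sqrt (∑ i', (F i' l) ^ 2) :=
    fun i l => lt_of_lt_of_le (hFpos i l) (hSge i l)
  have hShi : ∀ l : Fin L, Real.sqrt (∑ i', (F i' l) ^ 2) ≤ (2 + ε) * Real.sqrt N := by
    intro l
    have h1 : (∑ i' : Fin N, (F i' l) ^ 2) ≤ (N : ℝ) * (2 + ε) ^ 2 := by
      calc (∑ i' : Fin N, (F i' l) ^ 2) ≤ ∑ _i' : Fin N, (2 + ε) ^ 2 :=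
            Finset.sum_le_sum (fun i' _ =>
              pow_le_pow_left₀ (hFpos i' l).le (hFhi i' l) 2)
        _ = (N : ℝ) * (2 + ε) ^ 2 := by simp [Finset.sum_const, mul_comm]
    calc Real.sqrt (∑ i', (F i' l) ^ 2) ≤ Real.sqrt ((N : ℝ) * (2 + ε) ^ 2) :=
          Real.sqrt_le_sqrt h1
      _ = (2 + ε) * Real.sqrt N := by
          rw [Real.sqrt_mul (Nat.cast_nonneg N), Real.sqrt_sq h2ε.le, mul_comm]
  -- bounds on Ft
  have hNpos : (0:ℝ) < Real.sqrt N := Real.sqrt_pos.mpr (by exact_mod_cast hN)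
  have hFtpos : ∀ i l, 0 < Ft i l := by
    intro i l
    rw [hFt]
    exact div_pos (hFpos i l) (hSpos i l)
  have hFtle1 : ∀ i l, Ft i l ≤ 1 := by
    intro i l
    rw [hFt]
    exact div_le_one_of_le₀ (hSge i l) (hSpos i l).le
  have hFtlo : ∀ i l, ε / ((2 + ε) * Real.sqrt N) ≤ Ft i l := by
    intro i l
    rw [hFt]
    apply div_le_div₀ (hFpos i l).le (hFlo i l) (hSpos i l) (hShi l)
  -- bounds on T = ∑ Ft i l' ^ 2
  have hTge : Ft i l ≤ Real.sqrt (∑ l', (Ft i l') ^ 2) := by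
    have h1 : (Ft i l) ^ 2 ≤ ∑ l', (Ft i l') ^ 2 :=
      Finset.single_le_sum (f := fun l' => (Ft i l') ^ 2)
        (fun l' _ => sq_nonneg _) (Finset.mem_univ l)
    calc Ft i l = Real.sqrt ((Ft i l) ^ 2) := (Real.sqrt_sq (hFtpos i l).le).symm
      _ ≤ _ := Real.sqrt_le_sqrt h1
  have hTpos : 0 < Real.sqrt (∑ l', (Ft i l') ^ 2) :=
    lt_of_lt_of_le (hFtpos i l) hTge
  have hThi : Real.sqrt (∑ l', (Ft i l') ^ 2) ≤ Real.sqrt L := by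
    apply Real.sqrt_le_sqrt
    calc (∑ l' : Fin L, (Ft i l') ^ 2) ≤ ∑ _l' : Fin L, (1:ℝ) :=
          Finset.sum_le_sum (fun l' _ =>
            pow_le_one₀ (hFtpos i l').le (hFtle1 i l'))
      _ = (L : ℝ) := by simp
  constructor
  · rw [hz]
    have hLpos : (0:ℝ) < Real.sqrt L := Real.sqrt_pos.mpr (by exact_mod_cast hL)
    have key : ε / ((2 + ε) * Real.sqrt N) / Real.sqrt L ≤
        Ft i l / Real.sqrt (∑ l', (Ft i l') ^ 2) :=
      div_le_div₀ (hFtpos i l).le (hFtlo i l) hTpos hThi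
    calc ε / ((2 + ε) * Real.sqrt ((N : ℝ) * (L : ℝ)))
        = ε / ((2 + ε) * Real.sqrt N) / Real.sqrt L := by
          rw [Real.sqrt_mul (Nat.cast_nonneg N), div_div, mul_assoc]
      _ ≤ _ := key
  · rw [hz]
    exact div_le_one_of_le₀ hTge hTpos.le
end

section
/- For each learned feature l of the PSF pipeline, setting m₀ = ε/((2+ε)·√(N·L)), the empirical mean m of the column z_{1,l},…,z_{N,l} satisfies m₀ ≤ m ≤ 1 and the empirical variance v satisfies 0 ≤ v ≤ 1 − m₀². (Paper's Proposition 4, in corrected explicit form: for each learned feature, PSF bounds the expected value and the variance of the feature within fixed intervals determined by the constant ε of its non-linearity.) -/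
/-- Paper's Proposition 4 (corrected explicit form): for each learned feature l of
the PSF pipeline, with m₀ = ε/((2+ε)·√(N·L)), the empirical mean of the column
z_{1,l},…,z_{N,l} lies in [m₀, 1] and the empirical variance lies in [0, 1-m₀²]. -/
theorem psf_feature_moment_bounds
    (L M N : ℕ) (hL : 1 ≤ L) (hM : 1 ≤ M) (hN : 1 ≤ N)
    (W : Fin L → Fin M → ℝ) (x : Fin N → Fin M → ℝ)
    (ε : ℝ) (hε : 0 < ε)
    (F : Fin N → Fin L → ℝ)
    (hF : ∀ i l, F i l = 1 + ε + Real.sin (∑ m, W l m * x i m))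
    (Ft : Fin N → Fin L → ℝ)
    (hFt : ∀ i l, Ft i l = F i l / Real.sqrt (∑ i', (F i' l) ^ 2))
    (z : Fin N → Fin L → ℝ)
    (hz : ∀ i l, z i l = Ft i l / Real.sqrt (∑ l', (Ft i l') ^ 2))
    (m₀ : ℝ) (hm₀ : m₀ = ε / ((2 + ε) * Real.sqrt ((N : ℝ) * (L : ℝ)))) :
    ∀ l : Fin L,
      (m₀ ≤ (∑ i, z i l) / N ∧ (∑ i, z i l) / N ≤ 1) ∧
      (0 ≤ (∑ i, (z i l) ^ 2) / N - ((∑ i, z i l) / N) ^ 2 ∧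
        (∑ i, (z i l) ^ 2) / N - ((∑ i, z i l) / N) ^ 2 ≤ 1 - m₀ ^ 2) := by
  have hε2 : (0:ℝ) < 2 + ε := by linarith
  have hNpos : (0:ℝ) < (N:ℝ) := by exact_mod_cast hN
  have hLpos : (0:ℝ) < (L:ℝ)  := by exact_mod_cast hL
  -- bounds on F
  have hF_lb : ∀ i l', ε ≤ F i l' := by
    intro i l'; rw [hF]
    have := Real.neg_one_le_sin (∑ m, W l' m * x i m); linarith
  have hF_pos : ∀ i l', 0 < F i l' := fun i l' => lt_of_lt_of_le hε (hF_lb i l')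
  have hF_ub : ∀ i l', F i l' ≤ 2 + ε := by
    intro i l'; rw [hF]
    have := Real.sin_le_one (∑ m, W l' m * x i m); linarith
  -- column sums of squares
  have hS_pos : ∀ l' : Fin L, 0 < ∑ i', (F i' l') ^ 2 := by
    intro l'
    exact Finset.sum_pos (fun i _ => pow_pos (hF_pos i l') 2) ⟨⟨0, hN⟩, Finset.mem_univ _⟩
  have hsS_pos : ∀ l' : Fin L, 0 < Real.sqrt (∑ i', (F i' l') ^ 2) :=
    fun l' => Real.sqrt_pos.mpr (hS_pos l')
  -- Ft bounds
  have hFt_pos : ∀ i l', 0 < Ft i l' := by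
    intro i l'; rw [hFt]; exact div_pos (hF_pos i l') (hsS_pos l')
  have hFt_le_one : ∀ i l', Ft i l' ≤ 1 := by
    intro i l'; rw [hFt]
    rw [div_le_one (hsS_pos l')]
    rw [Real.le_sqrt' (hF_pos i l')]
    exact Finset.single_le_sum (f := fun i' => (F i' l') ^ 2)
      (fun i' _ => by positivity) (Finset.mem_univ i)
  have hFt_lb : ∀ i l', ε / ((2 + ε) * Real.sqrt N) ≤ Ft i l' := by
    intro i l'; rw [hFt]
    have hS_ub : Real.sqrt (∑ i', (F i' l') ^ 2) ≤ (2 + ε) * Real.sqrt N := by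
      have h1 : (∑ i', (F i' l') ^ 2) ≤ (N : ℝ) * (2 + ε) ^ 2 := by
        calc (∑ i', (F i' l') ^ 2) ≤ ∑ _i' : Fin N, (2 + ε) ^ 2 :=
              Finset.sum_le_sum (fun i' _ =>
                pow_le_pow_left₀ (hF_pos i' l').le (hF_ub i' l') 2)
          _ = (N : ℝ) * (2 + ε) ^ 2 := by simp [mul_comm]
      calc Real.sqrt (∑ i', (F i' l') ^ 2) ≤ Real.sqrt ((N:ℝ) * (2 + ε) ^ 2) :=
            Real.sqrt_le_sqrt h1
        _ = Real.sqrt N * (2 + ε) := by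
            rw [Real.sqrt_mul hNpos.le, Real.sqrt_sq hε2.le]
        _ = (2 + ε) * Real.sqrt N := mul_comm _ _
    have hεF := hF_lb i l'
    exact div_le_div₀ (hF_pos i l').le hεF (hsS_pos l') hS_ub
  -- row sums of squares of Ft
  have hT_pos : ∀ i : Fin N, 0 < ∑ l', (Ft i l') ^ 2 := by
    intro i
    exact Finset.sum_pos (fun l' _ => pow_pos (hFt_pos i l') 2) ⟨⟨0, hL⟩, Finset.mem_univ _⟩
  have hsT_pos : ∀ i, 0 < Real.sqrt (∑ l', (Ft i l') ^ 2) :=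
    fun i => Real.sqrt_pos.mpr (hT_pos i)
  -- z bounds
  have hz_le_one : ∀ i l', z i l' ≤ 1 := by
    intro i l'; rw [hz]
    rw [div_le_one (hsT_pos i), Real.le_sqrt' (hFt_pos i l')]
    exact Finset.single_le_sum (f := fun l'' => (Ft i l'') ^ 2)
      (fun l'' _ => by positivity) (Finset.mem_univ l')
  have hz_lb : ∀ i l', m₀ ≤ z i l' := by
    intro i l'; rw [hz, hm₀]
    have hT_ub : Real.sqrt (∑ l'', (Ft i l'') ^ 2) ≤ Real.sqrt L := by
      apply Real.sqrt_le_sqrt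
      calc (∑ l'', (Ft i l'') ^ 2) ≤ ∑ _l'' : Fin L, (1:ℝ) :=
            Finset.sum_le_sum (fun l'' _ => by
              have h1 := hFt_le_one i l''
              have h2 := (hFt_pos i l'').le
              nlinarith)
        _ = (L : ℝ) := by simp
    have key : ε / ((2 + ε) * Real.sqrt N) / Real.sqrt L ≤
        Ft i l' / Real.sqrt (∑ l'', (Ft i l'') ^ 2) := by
      apply div_le_div₀ (hFt_pos i l').le (hFt_lb i l') (hsT_pos i) hT_ub
    refine le_trans (le_of_eq ?_) key
    rw [Real.sqrt_mul hNpos.le]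
    rw [div_div]
    ring_nf
  have hz_pos : ∀ i l', 0 ≤ z i l' := by
    intro i l'
    refine le_trans ?_ (hz_lb i l')
    rw [hm₀]; positivity
  have hm₀_pos : 0 < m₀ := by rw [hm₀]; positivity
  intro l
  have hsum_lb : (N : ℝ) * m₀ ≤ ∑ i, z i l := by
    calc (N:ℝ) * m₀ = ∑ _i : Fin N, m₀ := by simp [mul_comm]
      _ ≤ ∑ i, z i l := Finset.sum_le_sum (fun i _ => hz_lb i l)
  have hsum_ub : (∑ i, z i l) ≤ (N : ℝ) := by
    calc (∑ i, z i l) ≤ ∑ _i : Fin N, (1:ℝ) :=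
          Finset.sum_le_sum (fun i _ => hz_le_one i l)
      _ = (N:ℝ) := by simp
  have hsumsq_ub : (∑ i, (z i l) ^ 2) ≤ (N : ℝ) := by
    calc (∑ i, (z i l) ^ 2) ≤ ∑ _i : Fin N, (1:ℝ) :=
          Finset.sum_le_sum (fun i _ => by
            have h1 := hz_le_one i l; have h2 := hz_pos i l; nlinarith)
      _ = (N:ℝ) := by simp
  have hmean_lb : m₀ ≤ (∑ i, z i l) / N := by
    rw [le_div_iff₀ hNpos]; linarith [hsum_lb]
  have hmean_ub : (∑ i, z i l) / N ≤ 1 := by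
    rw [div_le_one hNpos]; linarith
  have hCS : ((∑ i, z i l) / N) ^ 2 ≤ (∑ i, (z i l) ^ 2) / N := by
    have h := sq_sum_le_card_mul_sum_sq (s := Finset.univ) (f := fun i => z i l)
    simp only [Finset.card_univ, Fintype.card_fin] at h
    rw [div_pow, div_le_div_iff₀ (by positivity) hNpos]
    nlinarith [mul_le_mul_of_nonneg_right h hNpos.le]
  refine ⟨⟨hmean_lb, hmean_ub⟩, ?_, ?_⟩
  · linarith [hCS]
  · have h1 : m₀ ^ 2 ≤ ((∑ i, z i l) / N) ^ 2 :=
      pow_le_pow_left₀ hm₀_pos.le hmean_lb 2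
    have h2 : (∑ i, (z i l) ^ 2) / N ≤ 1 := by
      rw [div_le_one hNpos]; linarith
    linarith
end
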